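/- Let p, ℓ, A, B be real numbers with B > 0 and p − ℓ > −1. Then I_{p,ℓ}(A,B) = Σ_{n≥0} binom(p−ℓ, n) [ e^{(n+ℓ)A + (n+ℓ)²B²/2} G(−A/B − (n+ℓ)B) + e^{(p−n)A + (p−n)²B²/2} G(A/B + (p−n)B) ], where both series converge absolutely. (This is the exact term-by-term integrated binomial-series representation of I_{p,ℓ} obtained by splitting the integral at v* = −A/B.) -/

import Mathlib

/-!
Write `u = A + B v` and `α = p - ℓ`. Left of `v* = -A/B` we have `e^u < 1`, so the binomial series
gives `(1 + e^u)^α e^{ℓu} = ∑ binom(α, n) e^{(n+ℓ)u}`; right of `v*` we first factor out `e^u`, and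
`(1 + e^{-u})^α e^{pu} = ∑ binom(α, n) e^{(p-n)u}`. Completing the square, `φ(v) e^{mu}` integrates
over each half-line to `e^{mA + m²B²/2} G(∓A/B ∓ mB)`. Integration term by term is justified by
absolute summability: on the half-line where `m u ≤ 0`, bounding `φ ≤ 1/√(2π)` gives
`∫ φ e^{mu} ≤ 1/(√(2π) B |m|)`, and `∑ |binom(α, n)|/(n+1) < ∞` for `α > -1`, since
`|binom(α, n)|/(n+1) = |binom(α+1, n+1)|/(α+1)`.
-/

open MeasureTheory Real

/-- The standard Gaussian density `φ(v) = e^{-v²/2}/√(2π)` on `ℝ`. -/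
noncomputable def gaussPDF (v : ℝ) : ℝ := Real.exp (-v ^ 2 / 2) / Real.sqrt (2 * Real.pi)

/-- The standard normal cumulative distribution function
`G(z) = (1 + erf(z/√2))/2 = ∫_{-∞}^z φ(v) dv`. -/
noncomputable def stdNormalCDF (z : ℝ) : ℝ := ∫ v in Set.Iic z, gaussPDF v

/-- Generalized binomial coefficient `binom(α, n) = (∏_{i=0}^{n-1} (α - i)) / n!`. -/
noncomputable def gbinom (α : ℝ) (n : ℕ) : ℝ :=
  (∏ i ∈ Finset.range n, (α - (i : ℝ))) / (n.factorial : ℝ)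

/-- `I_{p,ℓ}(A,B) = ∫_ℝ φ(v) (1 + e^{A+Bv})^{p-ℓ} e^{ℓ(A+Bv)} dv`. -/
noncomputable def Iint (p ℓ A B : ℝ) : ℝ :=
  ∫ v : ℝ, gaussPDF v * (1 + Real.exp (A + B * v)) ^ (p - ℓ) * Real.exp (ℓ * (A + B * v))

open Set Filter

lemma gbinom_eq_choose (α : ℝ) (n : ℕ) : gbinom α n = Ring.choose α n := by
  rw [Ring.choose_eq_smul, gbinom, smul_eq_mul, ← descPochhammer_eval_eq_prod_range,
    div_eq_inv_mul, ← Polynomial.aeval_eq_smeval, Polynomial.aeval_def,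
    Polynomial.eval₂_eq_eval_map, descPochhammer_map]

lemma hasSum_gbinom_mul_pow (α : ℝ) {x : ℝ} (hx : |x| < 1) :
    HasSum (fun n => gbinom α n * x ^ n) ((1 + x) ^ α) := by
  have := (Real.one_add_rpow_hasFPowerSeriesOnBall_zero (a := α)).hasSum (y := x)
    (by simpa [edist_dist] using hx)
  simpa [FormalMultilinearSeries.ofScalars_apply_eq, gbinom_eq_choose, binomialSeries, mul_comm]
    using this

lemma hasSum_one_add_exp_rpow_mul_exp_of_neg (p ℓ : ℝ) {u : ℝ} (hu : u < 0) :
    HasSum (fun n : ℕ => gbinom (p - ℓ) n * exp ((n + ℓ) * u))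
      ((1 + exp u) ^ (p - ℓ) * exp (ℓ * u)) := by
  have h := (hasSum_gbinom_mul_pow (p - ℓ) (x := exp u)
    (by rwa [abs_of_pos (exp_pos u), Real.exp_lt_one_iff])).mul_right (exp (ℓ * u))
  refine h.congr_fun fun n => ?_
  rw [← exp_nat_mul, mul_assoc, ← exp_add, add_mul]

lemma hasSum_one_add_exp_rpow_mul_exp_of_pos (p ℓ : ℝ) {u : ℝ} (hu : 0 < u) :
    HasSum (fun n : ℕ => gbinom (p - ℓ) n * exp ((p - n) * u))
      ((1 + exp u) ^ (p - ℓ) * exp (ℓ * u)) := by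
  have h := (hasSum_gbinom_mul_pow (p - ℓ) (x := exp (-u))
    (by rwa [abs_of_pos (exp_pos _), Real.exp_lt_one_iff, neg_lt_zero])).mul_right (exp (p * u))
  have hsplit : (1 + exp u) ^ (p - ℓ) * exp (ℓ * u) = (1 + exp (-u)) ^ (p - ℓ) * exp (p * u) := by
    rw [show 1 + exp u = exp u * (1 + exp (-u)) by rw [mul_add, ← exp_add]; simp [add_comm],
      mul_rpow (exp_pos u).le (by positivity), ← exp_mul,
      show exp (p * u) = exp (u * (p - ℓ)) * exp (ℓ * u) by rw [← exp_add]; ring_nf]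
    ring
  rw [hsplit]
  refine h.congr_fun fun n => ?_
  rw [← exp_nat_mul, mul_assoc, ← exp_add]
  ring_nf

lemma gbinom_succ (α : ℝ) (n : ℕ) : gbinom α (n + 1) = gbinom α n * (α - n) / (n + 1) := by
  simp only [gbinom, Finset.prod_range_succ, Nat.factorial_succ]
  push_cast
  field_simp

lemma gbinom_add_one_succ (α : ℝ) (n : ℕ) :
    gbinom (α + 1) (n + 1) = (α + 1) * gbinom α n / (n + 1) := by
  simp only [gbinom, Finset.prod_range_succ', Nat.factorial_succ]
  push_cast
  field_simp
  ring_nf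

lemma summable_abs_gbinom {β : ℝ} (hβ : 0 < β) : Summable fun n => |gbinom β n| := by
  obtain ⟨N, hN⟩ := exists_nat_ge β
  rw [← summable_nat_add_iff N]
  set a : ℕ → ℝ := fun k => |gbinom β (k + N)|
  set e : ℕ → ℝ := fun k => (k + N) * a k
  -- for `n ≥ β`, `(n + 1) |binom(β, n + 1)| = (n - β) |binom(β, n)|`, so `β |binom(β, n)|` telescopes
  have htelescope : ∀ k, β * a k = e k - e (k + 1) := by
    intro k
    have hk : β ≤ (k + N : ℕ) := hN.trans (by exact_mod_cast Nat.le_add_left N k)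
    simp only [a, e, Nat.add_right_comm k 1 N, gbinom_succ, abs_div, abs_mul,
      abs_of_nonpos (sub_nonpos.2 hk), abs_of_pos (by positivity : (0:ℝ) < (k + N : ℕ) + 1)]
    push_cast
    field_simp
    ring
  refine summable_of_sum_range_le (c := e 0 / β) (fun k => abs_nonneg _) fun M => ?_
  rw [le_div_iff₀ hβ, Finset.sum_mul]
  simp only [mul_comm _ β, htelescope, Finset.sum_range_sub']
  have : 0 ≤ e M := by positivity
  linarith

lemma summable_abs_gbinom_div {α : ℝ} (hα : -1 < α) :
    Summable fun n : ℕ => |gbinom α n| / (n + 1) := by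
  have h := ((summable_nat_add_iff 1).2 (summable_abs_gbinom (neg_lt_iff_pos_add.1 hα))).div_const
    |α + 1|
  refine h.congr fun n => ?_
  rw [gbinom_add_one_succ, abs_div, abs_mul, abs_of_pos (by positivity : (0:ℝ) < n + 1),
    mul_div_assoc, mul_div_cancel_left₀ _ (abs_ne_zero.2 (by linarith : α + 1 ≠ 0))]

lemma summable_abs_gbinom_mul {α : ℝ} (hα : -1 < α) {g : ℕ → ℝ} {K : ℝ}
    (hg : ∀ᶠ n in atTop, |g n| ≤ K / (n + 1)) : Summable fun n => |gbinom α n * g n| := by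
  refine ((summable_abs_gbinom_div hα).mul_left K).of_norm_bounded_eventually_nat ?_
  filter_upwards [hg] with n hn
  rw [Real.norm_eq_abs, abs_abs, abs_mul, mul_div_assoc', mul_comm K, mul_div_assoc]
  exact mul_le_mul_of_nonneg_left hn (abs_nonneg _)

lemma gaussPDF_neg (v : ℝ) : gaussPDF (-v) = gaussPDF v := by
  rw [gaussPDF, gaussPDF, neg_sq]

lemma gaussPDF_mul_exp_nonneg (v t : ℝ) : 0 ≤ gaussPDF v * exp t := by
  rw [gaussPDF]
  positivity

lemma gaussPDF_le (v : ℝ) : gaussPDF v ≤ (√(2 * π))⁻¹ := by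
  rw [gaussPDF, div_eq_mul_inv]
  exact mul_le_of_le_one_left (by positivity) (exp_le_one_iff.2 (by nlinarith [sq_nonneg v]))

lemma gaussPDF_mul_exp (μ v : ℝ) :
    gaussPDF v * exp (μ * v) = exp (μ ^ 2 / 2) * gaussPDF (v - μ) := by
  simp only [gaussPDF, mul_div_assoc', div_mul_eq_mul_div, ← exp_add]
  ring_nf

lemma integrable_gaussPDF : Integrable gaussPDF := by
  refine (ProbabilityTheory.integrable_gaussianPDFReal 0 1).congr (.of_forall fun v => ?_)
  simp [ProbabilityTheory.gaussianPDFReal, gaussPDF, div_eq_inv_mul]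

lemma integrable_gaussPDF_mul_exp (μ : ℝ) : Integrable fun v => gaussPDF v * exp (μ * v) := by
  simp_rw [gaussPDF_mul_exp]
  exact (integrable_gaussPDF.comp_sub_right μ).const_mul _

lemma setIntegral_Iic_gaussPDF_sub (c μ : ℝ) :
    ∫ v in Iic c, gaussPDF (v - μ) = stdNormalCDF (c - μ) := by
  rw [stdNormalCDF, ← integral_indicator measurableSet_Iic, ← integral_indicator measurableSet_Iic,
    ← integral_sub_right_eq_self ((Iic (c - μ)).indicator gaussPDF) μ]
  congr 1 with v
  simp only [indicator_apply, mem_Iic, sub_le_sub_iff_right]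

lemma setIntegral_Iic_gaussPDF_mul_exp (c μ : ℝ) :
    ∫ v in Iic c, gaussPDF v * exp (μ * v) = exp (μ ^ 2 / 2) * stdNormalCDF (c - μ) := by
  simp_rw [gaussPDF_mul_exp]
  rw [integral_const_mul, setIntegral_Iic_gaussPDF_sub]

lemma setIntegral_Ioi_gaussPDF_mul_exp_eq (c μ : ℝ) :
    ∫ v in Ioi c, gaussPDF v * exp (μ * v) = ∫ v in Iic (-c), gaussPDF v * exp (-μ * v) := by
  rw [← integral_comp_neg_Ioi]
  simp only [gaussPDF_neg, neg_mul_neg]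

lemma setIntegral_Ioi_gaussPDF_mul_exp (c μ : ℝ) :
    ∫ v in Ioi c, gaussPDF v * exp (μ * v) = exp (μ ^ 2 / 2) * stdNormalCDF (μ - c) := by
  rw [setIntegral_Ioi_gaussPDF_mul_exp_eq, setIntegral_Iic_gaussPDF_mul_exp, neg_sq, sub_neg_eq_add,
    neg_add_eq_sub]

lemma setIntegral_Iic_gaussPDF_mul_exp_le {μ : ℝ} (hμ : 0 < μ) (c : ℝ) :
    ∫ v in Iic c, gaussPDF v * exp (μ * v) ≤ exp (μ * c) / (√(2 * π) * μ) := by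
  calc ∫ v in Iic c, gaussPDF v * exp (μ * v)
      ≤ ∫ v in Iic c, (√(2 * π))⁻¹ * exp (μ * v) :=
        setIntegral_mono_on (integrable_gaussPDF_mul_exp μ).integrableOn
          ((integrableOn_exp_mul_Iic hμ c).const_mul _) measurableSet_Iic
          fun v _ => mul_le_mul_of_nonneg_right (gaussPDF_le v) (exp_pos _).le
    _ = exp (μ * c) / (√(2 * π) * μ) := by
        rw [integral_const_mul, integral_exp_mul_Iic hμ]
        field_simp

lemma setIntegral_Ioi_gaussPDF_mul_exp_le {μ : ℝ} (hμ : μ < 0) (c : ℝ) :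
    ∫ v in Ioi c, gaussPDF v * exp (μ * v) ≤ exp (μ * c) / (√(2 * π) * -μ) := by
  rw [setIntegral_Ioi_gaussPDF_mul_exp_eq, ← neg_mul_neg μ c]
  exact setIntegral_Iic_gaussPDF_mul_exp_le (neg_pos.2 hμ) (-c)

lemma integrable_of_hasSum_of_summable_integral_norm {X E : Type*} [MeasurableSpace X]
    {μ : Measure X} [NormedAddCommGroup E] {F : ℕ → X → E} {f : X → E}
    (hF_int : ∀ n, Integrable (F n) μ) (hF_sum : Summable fun n => ∫ x, ‖F n x‖ ∂μ)
    (hf : ∀ᵐ x ∂μ, HasSum (fun n => F n x) (f x)) : Integrable f μ := by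
  refine ⟨aestronglyMeasurable_of_tendsto_ae atTop
    (fun N => Finset.aestronglyMeasurable_fun_sum _ fun n _ => (hF_int n).1)
    (hf.mono fun x hx => hx.tendsto_sum_nat), ?_⟩
  calc ∫⁻ x, ‖f x‖ₑ ∂μ ≤ ∫⁻ x, ∑' n, ‖F n x‖ₑ ∂μ :=
        lintegral_mono_ae (hf.mono fun x hx => hx.tsum_eq ▸ enorm_tsum_le_tsum_enorm)
    _ = ENNReal.ofReal (∑' n, ∫ x, ‖F n x‖ ∂μ) := by
        rw [lintegral_tsum fun n => (hF_int n).1.enorm,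
          ENNReal.ofReal_tsum_of_nonneg (fun n => integral_nonneg fun x => norm_nonneg _) hF_sum]
        exact tsum_congr fun n => (ofReal_integral_norm_eq_lintegral_enorm (hF_int n)).symm
    _ < ⊤ := ENNReal.ofReal_lt_top

lemma integrable_and_integral_eq_tsum_of_hasSum {X : Type*} [MeasurableSpace X]
    {μ : Measure X} {c : ℕ → ℝ} {g : ℕ → X → ℝ} {f : X → ℝ}
    (hg_nonneg : ∀ n, 0 ≤ᵐ[μ] g n) (hg_int : ∀ n, Integrable (g n) μ)
    (hsum : Summable fun n => |c n * ∫ x, g n x ∂μ|)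
    (hf : ∀ᵐ x ∂μ, HasSum (fun n => c n * g n x) (f x)) :
    Integrable f μ ∧ ∫ x, f x ∂μ = ∑' n, c n * ∫ x, g n x ∂μ := by
  have hint : ∀ n, Integrable (fun x => c n * g n x) μ := fun n => (hg_int n).const_mul _
  have hnorm : ∀ n, ∫ x, ‖c n * g n x‖ ∂μ = |c n * ∫ x, g n x ∂μ| := fun n => by
    rw [abs_mul, abs_of_nonneg (integral_nonneg_of_ae (hg_nonneg n)), ← integral_const_mul]
    refine integral_congr_ae ((hg_nonneg n).mono fun x hx => ?_)
    simp only [Real.norm_eq_abs, abs_mul, abs_of_nonneg hx]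
  simp_rw [← hnorm] at hsum
  refine ⟨integrable_of_hasSum_of_summable_integral_norm hint hsum hf, ?_⟩
  rw [integral_congr_ae (hf.mono fun x hx => hx.tsum_eq.symm),
    ← integral_tsum_of_summable_integral_norm hint hsum]
  simp_rw [integral_const_mul]

lemma gaussPDF_mul_exp_affine (m A B v : ℝ) :
    gaussPDF v * exp (m * (A + B * v)) = exp (m * A) * (gaussPDF v * exp (m * B * v)) := by
  rw [mul_add, exp_add, ← mul_assoc m B]
  ring

lemma setIntegral_Iic_gaussPDF_mul_exp_affine (m A B : ℝ) :
    ∫ v in Iic (-A / B), gaussPDF v * exp (m * (A + B * v))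
      = exp (m * A + m ^ 2 * B ^ 2 / 2) * stdNormalCDF (-A / B - m * B) := by
  simp_rw [gaussPDF_mul_exp_affine]
  rw [integral_const_mul, setIntegral_Iic_gaussPDF_mul_exp, ← mul_assoc, ← exp_add, mul_pow]

lemma setIntegral_Ioi_gaussPDF_mul_exp_affine (m A B : ℝ) :
    ∫ v in Ioi (-A / B), gaussPDF v * exp (m * (A + B * v))
      = exp (m * A + m ^ 2 * B ^ 2 / 2) * stdNormalCDF (A / B + m * B) := by
  simp_rw [gaussPDF_mul_exp_affine]
  rw [integral_const_mul, setIntegral_Ioi_gaussPDF_mul_exp, ← mul_assoc, ← exp_add, mul_pow,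
    neg_div, sub_neg_eq_add, add_comm (m * B)]

lemma setIntegral_Iic_gaussPDF_mul_exp_affine_le {m A B : ℝ} (hm : 0 < m) (hB : 0 < B) :
    ∫ v in Iic (-A / B), gaussPDF v * exp (m * (A + B * v)) ≤ (√(2 * π) * B)⁻¹ / m := by
  simp_rw [gaussPDF_mul_exp_affine]
  rw [integral_const_mul]
  calc exp (m * A) * ∫ v in Iic (-A / B), gaussPDF v * exp (m * B * v)
      ≤ exp (m * A) * (exp (m * B * (-A / B)) / (√(2 * π) * (m * B))) := by
        gcongr
        exact setIntegral_Iic_gaussPDF_mul_exp_le (mul_pos hm hB) _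
    _ = (√(2 * π) * B)⁻¹ / m := by
        rw [mul_div_assoc', ← exp_add, show m * A + m * B * (-A / B) = 0 by field_simp; ring,
          exp_zero]
        field_simp

lemma setIntegral_Ioi_gaussPDF_mul_exp_affine_le {m A B : ℝ} (hm : m < 0) (hB : 0 < B) :
    ∫ v in Ioi (-A / B), gaussPDF v * exp (m * (A + B * v)) ≤ (√(2 * π) * B)⁻¹ / -m := by
  simp_rw [gaussPDF_mul_exp_affine]
  rw [integral_const_mul]
  calc exp (m * A) * ∫ v in Ioi (-A / B), gaussPDF v * exp (m * B * v)
      ≤ exp (m * A) * (exp (m * B * (-A / B)) / (√(2 * π) * -(m * B))) := by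
        gcongr
        exact setIntegral_Ioi_gaussPDF_mul_exp_le (mul_neg_of_neg_of_pos hm hB) _
    _ = (√(2 * π) * B)⁻¹ / -m := by
        rw [mul_div_assoc', ← exp_add, show m * A + m * B * (-A / B) = 0 by field_simp; ring,
          exp_zero]
        field_simp

lemma integrable_gaussPDF_mul_exp_affine (m A B : ℝ) :
    Integrable fun v => gaussPDF v * exp (m * (A + B * v)) := by
  simp_rw [gaussPDF_mul_exp_affine]
  exact (integrable_gaussPDF_mul_exp _).const_mul _

lemma div_le_two_mul_div {K x y : ℝ} (hK : 0 ≤ K) (hy : 0 < y) (h : y ≤ 2 * x) :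
    K / x ≤ 2 * K / y := by
  rw [div_le_div_iff₀ (by linarith) hy]
  nlinarith

lemma summable_abs_gbinom_mul_setIntegral_Iic {p ℓ A B : ℝ} (hB : 0 < B) (hpl : -1 < p - ℓ) :
    Summable fun n : ℕ => |gbinom (p - ℓ) n
      * ∫ v in Iic (-A / B), gaussPDF v * exp ((n + ℓ) * (A + B * v))| := by
  refine summable_abs_gbinom_mul hpl (K := 2 * (√(2 * π) * B)⁻¹) ?_
  filter_upwards [eventually_ge_atTop ⌈1 - 2 * ℓ⌉₊] with n hn
  have hn : 1 - 2 * ℓ ≤ n := Nat.ceil_le.1 hn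
  rw [abs_of_nonneg (setIntegral_nonneg measurableSet_Iic fun v _ => gaussPDF_mul_exp_nonneg _ _)]
  exact (setIntegral_Iic_gaussPDF_mul_exp_affine_le (by linarith) hB).trans
    (div_le_two_mul_div (by positivity) (by positivity) (by linarith))

lemma summable_abs_gbinom_mul_setIntegral_Ioi {p ℓ A B : ℝ} (hB : 0 < B) (hpl : -1 < p - ℓ) :
    Summable fun n : ℕ => |gbinom (p - ℓ) n
      * ∫ v in Ioi (-A / B), gaussPDF v * exp ((p - n) * (A + B * v))| := by
  refine summable_abs_gbinom_mul hpl (K := 2 * (√(2 * π) * B)⁻¹) ?_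
  filter_upwards [eventually_ge_atTop ⌈2 * p + 1⌉₊] with n hn
  have hn : 2 * p + 1 ≤ n := Nat.ceil_le.1 hn
  rw [abs_of_nonneg (setIntegral_nonneg measurableSet_Ioi fun v _ => gaussPDF_mul_exp_nonneg _ _)]
  exact (setIntegral_Ioi_gaussPDF_mul_exp_affine_le (by linarith) hB).trans
    (div_le_two_mul_div (by positivity) (by positivity) (by linarith))

lemma hasSum_integrand_of_lt (p ℓ : ℝ) {A B v : ℝ} (hB : 0 < B) (hv : v < -A / B) :
    HasSum (fun n : ℕ => gbinom (p - ℓ) n * (gaussPDF v * exp ((n + ℓ) * (A + B * v))))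
      (gaussPDF v * (1 + exp (A + B * v)) ^ (p - ℓ) * exp (ℓ * (A + B * v))) := by
  have hu : A + B * v < 0 := by have := (lt_div_iff₀ hB).1 hv; linarith
  simpa only [mul_left_comm, mul_assoc] using
    (hasSum_one_add_exp_rpow_mul_exp_of_neg p ℓ hu).mul_left (gaussPDF v)

lemma hasSum_integrand_of_gt (p ℓ : ℝ) {A B v : ℝ} (hB : 0 < B) (hv : -A / B < v) :
    HasSum (fun n : ℕ => gbinom (p - ℓ) n * (gaussPDF v * exp ((p - n) * (A + B * v))))
      (gaussPDF v * (1 + exp (A + B * v)) ^ (p - ℓ) * exp (ℓ * (A + B * v))) := by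
  have hu : 0 < A + B * v := by have := (div_lt_iff₀ hB).1 hv; linarith
  simpa only [mul_left_comm, mul_assoc] using
    (hasSum_one_add_exp_rpow_mul_exp_of_pos p ℓ hu).mul_left (gaussPDF v)

/-- Exact term-by-term integrated binomial-series representation of `I_{p,ℓ}(A,B)`,
obtained by splitting the integral at `v* = -A/B`; both series converge absolutely. -/
theorem Iint_series (p ℓ A B : ℝ) (hB : 0 < B) (hpl : p - ℓ > -1) :
    Summable (fun n : ℕ => |gbinom (p - ℓ) n
        * (Real.exp (((n : ℝ) + ℓ) * A + ((n : ℝ) + ℓ) ^ 2 * B ^ 2 / 2)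
            * stdNormalCDF (-A / B - ((n : ℝ) + ℓ) * B))|) ∧
    Summable (fun n : ℕ => |gbinom (p - ℓ) n
        * (Real.exp ((p - (n : ℝ)) * A + (p - (n : ℝ)) ^ 2 * B ^ 2 / 2)
            * stdNormalCDF (A / B + (p - (n : ℝ)) * B))|) ∧
    Iint p ℓ A B
      = ∑' n : ℕ, gbinom (p - ℓ) n
          * (Real.exp (((n : ℝ) + ℓ) * A + ((n : ℝ) + ℓ) ^ 2 * B ^ 2 / 2)
                * stdNormalCDF (-A / B - ((n : ℝ) + ℓ) * B)
             + Real.exp ((p - (n : ℝ)) * A + (p - (n : ℝ)) ^ 2 * B ^ 2 / 2)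
                * stdNormalCDF (A / B + (p - (n : ℝ)) * B)) := by
  simp only [← setIntegral_Iic_gaussPDF_mul_exp_affine, ← setIntegral_Ioi_gaussPDF_mul_exp_affine]
  have hlo := summable_abs_gbinom_mul_setIntegral_Iic (A := A) hB hpl
  have hhi := summable_abs_gbinom_mul_setIntegral_Ioi (A := A) hB hpl
  have hF_lo : ∀ᵐ v ∂volume.restrict (Iic (-A / B)),
      HasSum (fun n : ℕ => gbinom (p - ℓ) n * (gaussPDF v * exp ((n + ℓ) * (A + B * v))))
        (gaussPDF v * (1 + exp (A + B * v)) ^ (p - ℓ) * exp (ℓ * (A + B * v))) := by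
    rw [← Measure.restrict_congr_set Iio_ae_eq_Iic]
    exact ae_restrict_of_forall_mem measurableSet_Iio fun v hv => hasSum_integrand_of_lt p ℓ hB hv
  have hF_hi : ∀ᵐ v ∂volume.restrict (Ioi (-A / B)),
      HasSum (fun n : ℕ => gbinom (p - ℓ) n * (gaussPDF v * exp ((p - n) * (A + B * v))))
        (gaussPDF v * (1 + exp (A + B * v)) ^ (p - ℓ) * exp (ℓ * (A + B * v))) :=
    ae_restrict_of_forall_mem measurableSet_Ioi fun v hv => hasSum_integrand_of_gt p ℓ hB hv
  obtain ⟨hint_lo, hI_lo⟩ := integrable_and_integral_eq_tsum_of_hasSum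
    (fun n => ae_of_all _ fun v => gaussPDF_mul_exp_nonneg _ _)
    (fun n => (integrable_gaussPDF_mul_exp_affine _ A B).integrableOn) hlo hF_lo
  obtain ⟨hint_hi, hI_hi⟩ := integrable_and_integral_eq_tsum_of_hasSum
    (fun n => ae_of_all _ fun v => gaussPDF_mul_exp_nonneg _ _)
    (fun n => (integrable_gaussPDF_mul_exp_affine _ A B).integrableOn) hhi hF_hi
  refine ⟨hlo, hhi, ?_⟩
  rw [Iint, ← intervalIntegral.integral_Iic_add_Ioi hint_lo hint_hi, hI_lo, hI_hi,
    ← (summable_abs_iff.1 hlo).tsum_add (summable_abs_iff.1 hhi)]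
  simp_rw [mul_add]
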